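/- For every t ≥ 1 and every nonzero x ∈ C^t, if y = A_t x (where A_t is the (t+2)×t matrix with consecutive column entries 1, -2, 1), then the number of zero entries of y is at most t - 1. -/
import Mathlib


/-- The `(t+2) × t` matrix whose `j`-th column has entries `1, -2, 1` in rows
`j, j+1, j+2` and zeros elsewhere. -/
def matA (t : ℕ) : Matrix (Fin (t + 2)) (Fin t) ℂ :=
  Matrix.of fun i j =>
    if (i : ℕ) = j then 1
    else if (i : ℕ) = (j : ℕ) + 1 then -2
    else if (i : ℕ) = (j : ℕ) + 2 then 1
    else 0

lemma colsum (t : ℕ) (j : Fin t) : ∑ i : Fin (t+2), matA t i j = 0 := by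
  have h : ∀ i : Fin (t+2), matA t i j =
      (if (i:ℕ) = (j:ℕ) then (1:ℂ) else 0) + (if (i:ℕ) = (j:ℕ)+1 then -2 else 0)
        + (if (i:ℕ) = (j:ℕ)+2 then 1 else 0) := by
    intro i
    simp only [matA, Matrix.of_apply]
    split_ifs <;> first | omega | ring
  rw [Finset.sum_congr rfl (fun i _ => h i)]
  rw [Fin.sum_univ_eq_sum_range (fun i => (if i = (j:ℕ) then (1:ℂ) else 0)
    + (if i = (j:ℕ)+1 then -2 else 0) + (if i = (j:ℕ)+2 then 1 else 0))]
  rw [Finset.sum_add_distrib, Finset.sum_add_distrib,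
    Finset.sum_ite_eq' (Finset.range (t+2)) ((j:ℕ)) (fun _ => (1:ℂ)),
    Finset.sum_ite_eq' (Finset.range (t+2)) ((j:ℕ)+1) (fun _ => (-2:ℂ)),
    Finset.sum_ite_eq' (Finset.range (t+2)) ((j:ℕ)+2) (fun _ => (1:ℂ))]
  have := j.isLt
  simp only [Finset.mem_range]
  rw [if_pos (by omega), if_pos (by omega), if_pos (by omega)]
  ring

lemma colsumw (t : ℕ) (j : Fin t) : ∑ i : Fin (t+2), (i:ℂ) * matA t i j = 0 := by
  have h : ∀ i : Fin (t+2), (i:ℂ) * matA t i j =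
      (if (i:ℕ) = (j:ℕ) then ((j:ℕ):ℂ) else 0)
        + (if (i:ℕ) = (j:ℕ)+1 then -2*(((j:ℕ):ℂ)+1) else 0)
        + (if (i:ℕ) = (j:ℕ)+2 then ((j:ℕ):ℂ)+2 else 0) := by
    intro i
    simp only [matA, Matrix.of_apply]
    split_ifs <;> first | omega | (push_cast [*]; ring)
  rw [Finset.sum_congr rfl (fun i _ => h i)]
  rw [Fin.sum_univ_eq_sum_range (fun i => (if i = (j:ℕ) then ((j:ℕ):ℂ) else 0)
    + (if i = (j:ℕ)+1 then -2*(((j:ℕ):ℂ)+1) else 0)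
    + (if i = (j:ℕ)+2 then ((j:ℕ):ℂ)+2 else 0))]
  rw [Finset.sum_add_distrib, Finset.sum_add_distrib,
    Finset.sum_ite_eq' (Finset.range (t+2)) ((j:ℕ)) (fun _ => ((j:ℕ):ℂ)),
    Finset.sum_ite_eq' (Finset.range (t+2)) ((j:ℕ)+1) (fun _ => (-2*(((j:ℕ):ℂ)+1))),
    Finset.sum_ite_eq' (Finset.range (t+2)) ((j:ℕ)+2) (fun _ => ((j:ℕ):ℂ)+2)]
  have := j.isLt
  simp only [Finset.mem_range]
  rw [if_pos (by omega), if_pos (by omega), if_pos (by omega)]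
  ring

open Classical in
theorem stmt_16 (t : ℕ) (ht : 1 ≤ t) (x : Fin t → ℂ) (hx : x ≠ 0)
    (y : Fin (t + 2) → ℂ) (hy : y = (matA t).mulVec x) :
    (Finset.univ.filter fun i => y i = 0).card ≤ t - 1 := by
  -- least index where x is nonzero
  have hxne : (Finset.univ.filter fun j : Fin t => x j ≠ 0).Nonempty := by
    by_contra h
    apply hx
    funext j
    rw [Finset.not_nonempty_iff_eq_empty, Finset.filter_eq_empty_iff] at h
    have := h (Finset.mem_univ j)
    simpa using this
  obtain ⟨j0, hj0mem, hmin⟩ := Finset.exists_min_image _ (fun j : Fin t => (j:ℕ)) hxne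
  have hj0 : x j0 ≠ 0 := (Finset.mem_filter.mp hj0mem).2
  have hxzero : ∀ j : Fin t, (j:ℕ) < (j0:ℕ) → x j = 0 := by
    intro j hj
    by_contra h
    exact absurd (hmin j (Finset.mem_filter.mpr ⟨Finset.mem_univ _, h⟩)) (by omega)
  have hj0lt := j0.isLt
  set i0 : Fin (t+2) := ⟨(j0:ℕ), by omega⟩ with hi0
  -- y at i0 equals x j0, hence nonzero
  have hyi0 : y i0 = x j0 := by
    rw [hy]
    simp only [Matrix.mulVec, dotProduct]
    rw [Finset.sum_eq_single j0]
    · have : matA t i0 j0 = 1 := by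
        simp only [matA, Matrix.of_apply, hi0]
        exact if_pos trivial
      rw [this, one_mul]
    · intro j _ hne
      have hv : (j:ℕ) ≠ (j0:ℕ) := fun h => hne (Fin.ext h)
      by_cases hlt : (j:ℕ) < (j0:ℕ)
      · rw [hxzero j hlt, mul_zero]
      · have hgt : (j0:ℕ) < (j:ℕ) := by omega
        have : matA t i0 j = 0 := by
          simp only [matA, Matrix.of_apply, hi0]
          rw [if_neg (by omega), if_neg (by omega), if_neg (by omega)]
        rw [this, zero_mul]
    · intro h; exact absurd (Finset.mem_univ j0) h
  -- global sum identities
  have hs0 : ∑ i, y i = 0 := by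
    rw [hy]
    simp only [Matrix.mulVec, dotProduct]
    rw [Finset.sum_comm]
    apply Finset.sum_eq_zero
    intro j _
    rw [← Finset.sum_mul, colsum, zero_mul]
  have hs1 : ∑ i : Fin (t+2), (i:ℂ) * y i = 0 := by
    rw [hy]
    simp only [Matrix.mulVec, dotProduct]
    simp_rw [Finset.mul_sum, ← mul_assoc]
    rw [Finset.sum_comm]
    apply Finset.sum_eq_zero
    intro j _
    rw [← Finset.sum_mul, colsumw, zero_mul]
  set N := Finset.univ.filter fun i : Fin (t+2) => y i ≠ 0 with hN
  have hmemN : ∀ i : Fin (t+2), i ∈ N ↔ y i ≠ 0 := by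
    intro i; simp [hN]
  have hNs0 : ∑ i ∈ N, y i = 0 := by
    rw [← hs0]
    apply Finset.sum_subset (Finset.filter_subset _ _)
    intro i _ hni
    rw [hmemN] at hni
    simpa using hni
  have hNs1 : ∑ i ∈ N, (i:ℂ) * y i = 0 := by
    rw [← hs1]
    apply Finset.sum_subset (Finset.filter_subset _ _)
    intro i _ hni
    rw [hmemN] at hni
    have : y i = 0 := by simpa using hni
    rw [this, mul_zero]
  have hi0N : i0 ∈ N := by rw [hmemN, hyi0]; exact hj0
  have hcard3 : 3 ≤ N.card := by
    by_contra hc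
    push_neg at hc
    have h1 : 1 ≤ N.card := Finset.card_pos.mpr ⟨i0, hi0N⟩
    have h12 : N.card = 1 ∨ N.card = 2 := by omega
    rcases h12 with h | h
    · obtain ⟨a, ha⟩ := Finset.card_eq_one.mp h
      have haN : a ∈ N := by rw [ha]; exact Finset.mem_singleton_self a
      rw [ha, Finset.sum_singleton] at hNs0
      exact (hmemN a).mp haN hNs0
    · obtain ⟨a, b, hab, hNab⟩ := Finset.card_eq_two.mp h
      have haN : a ∈ N := by rw [hNab]; simp
      have hbN : b ∈ N := by rw [hNab]; simp
      have hya : y a ≠ 0 := (hmemN a).mp haN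
      have hyb : y b ≠ 0 := (hmemN b).mp hbN
      rw [hNab, Finset.sum_pair hab] at hNs0 hNs1
      have h3 : (((a:ℕ):ℂ) - ((b:ℕ):ℂ)) * y a = 0 := by
        linear_combination hNs1 - ((b:ℕ):ℂ) * hNs0
      rcases mul_eq_zero.mp h3 with h4 | h4
      · have : ((a:ℕ):ℂ) = ((b:ℕ):ℂ) := by linear_combination h4
        have hnat : (a:ℕ) = (b:ℕ) := Nat.cast_injective this
        exact hab (Fin.ext hnat)
      · exact hya h4
  have hZN : (Finset.univ.filter fun i : Fin (t+2) => y i = 0) = Finset.univ \ N := by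
    rw [hN]; ext i; simp
  have hNle : N.card ≤ t + 2 := by
    have := Finset.card_le_univ N
    simpa using this
  rw [hZN, Finset.card_sdiff_of_subset (Finset.subset_univ N), Finset.card_univ, Fintype.card_fin]
  omega
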